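/- arXiv:1005.3550 — 5 statements merged into one kernel-verified Lean document; each statement's English description precedes it below -/
import Mathlib

section
/- Let S₁ = K⟨x,y | yx=1⟩ and λ ∈ K with λ ≠ -1. Then in the 2×2 matrix ring M₂(S₁) the identity [[1,0],[-(1+λ)^{-1}y,1]] · [[1,λx],[0,1]] · [[1,0],[y,1]] · [[1,-λ(1+λ)^{-1}x],[0,1]] = [[1+λ,0],[0,(1+λ)^{-1}]] · [[1-λ(1+λ)^{-1}E₀₀,0],[0,1]] holds, where E₀₀ := 1 - xy. -/
/-!
Put `u = (1 + λ)⁻¹` and multiply out from the left. The relation `yx = 1` gives `y(xy) = y` and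
`(1 + λxy)x = (1 + λ)x`, which, together with `(1 + λ)u = 1`, clear the off-diagonal entries one
after the other, so the product is `diag(1 + λxy, u)`. The right-hand side is the same diagonal
matrix, since `(1 + λ)(1 - λu(1 - xy)) = 1 + λxy` needs only `(1 + λ)u = 1`.
-/

section
variable {K A : Type*} [CommRing K] [Ring A] [Algebra K A] {x y : A} {lam u : K}

theorem upper_mul_lower :
    (!![1, lam • x; 0, 1] * !![1, 0; y, 1] : Matrix (Fin 2) (Fin 2) A) =
      !![1 + lam • (x * y), lam • x; y, 1] := by
  simp

theorem lower_mul_upper_mul_lower (hyx : y * x = 1) (hu : (1 + lam) * u = 1) :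
    (!![1, 0; -(u • y), 1] * !![1 + lam • (x * y), lam • x; y, 1] : Matrix (Fin 2) (Fin 2) A) =
      !![1 + lam • (x * y), lam • x; 0, algebraMap K A u] := by
  have hyxy : y * (x * y) = y := by rw [← mul_assoc, hyx, one_mul]
  have h21 : -(u • y) * (1 + lam • (x * y)) + 1 * y = 0 := by
    simp only [neg_mul, mul_add, mul_one, one_mul, smul_mul_assoc, mul_smul_comm, hyxy]
    match_scalars
    linear_combination -hu
  have h22 : -(u • y) * lam • x + 1 * 1 = algebraMap K A u := by
    rw [neg_mul, smul_mul_smul_comm, hyx, mul_one, Algebra.algebraMap_eq_smul_one]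
    match_scalars
    linear_combination -hu
  rw [Matrix.mul_fin_two, h21, h22]
  simp

theorem upper_triangular_mul_upper (hyx : y * x = 1) (hu : (1 + lam) * u = 1) (d : A) :
    (!![1 + lam • (x * y), lam • x; 0, d] * !![1, -((lam * u) • x); 0, 1]
      : Matrix (Fin 2) (Fin 2) A) = !![1 + lam • (x * y), 0; 0, d] := by
  have hx : (1 + lam • (x * y)) * x = (1 + lam) • x := by
    rw [add_mul, smul_mul_assoc, mul_assoc, hyx, mul_one, one_mul, add_smul, one_smul]
  have h12 : (1 + lam • (x * y)) * -((lam * u) • x) + lam • x * 1 = 0 := by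
    rw [mul_neg, mul_smul_comm, hx, smul_smul, mul_one]
    match_scalars
    linear_combination -lam * hu
  rw [Matrix.mul_fin_two, h12]
  simp

theorem diagonal_mul_diagonal_eq (hu : (1 + lam) * u = 1) :
    (!![algebraMap K A (1 + lam), 0; 0, algebraMap K A u] *
        !![1 - (lam * u) • (1 - x * y), 0; 0, 1] : Matrix (Fin 2) (Fin 2) A) =
      !![1 + lam • (x * y), 0; 0, algebraMap K A u] := by
  have h11 : algebraMap K A (1 + lam) * (1 - (lam * u) • (1 - x * y)) = 1 + lam • (x * y) := by
    rw [Algebra.algebraMap_eq_smul_one, smul_one_mul, smul_sub, smul_smul, smul_sub]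
    match_scalars
    · linear_combination -lam * hu
    · linear_combination lam * hu
  rw [Matrix.mul_fin_two, h11]
  simp

theorem lower_upper_lower_upper_eq (hyx : y * x = 1) (hu : (1 + lam) * u = 1) :
    (!![1, 0; -(u • y), 1] * !![1, lam • x; 0, 1] * !![1, 0; y, 1] *
        !![1, -((lam * u) • x); 0, 1] : Matrix (Fin 2) (Fin 2) A) =
      !![algebraMap K A (1 + lam), 0; 0, algebraMap K A u] *
        !![1 - (lam * u) • (1 - x * y), 0; 0, 1] := by
  rw [Matrix.mul_assoc _ !![1, lam • x; 0, 1], upper_mul_lower,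
    lower_mul_upper_mul_lower hyx hu, upper_triangular_mul_upper hyx hu,
    diagonal_mul_diagonal_eq hu]

end

/-- In `M₂(S₁)`, where `S₁ = K⟨x,y | yx = 1⟩` and `E₀₀ = 1 - xy`, for `λ ∈ K`, `λ ≠ -1`:
`[[1,0],[-(1+λ)⁻¹y,1]]·[[1,λx],[0,1]]·[[1,0],[y,1]]·[[1,-λ(1+λ)⁻¹x],[0,1]]
  = [[1+λ,0],[0,(1+λ)⁻¹]]·[[1-λ(1+λ)⁻¹E₀₀,0],[0,1]]`. -/
theorem elementary_matrix_identity_S1 {K A : Type*} [Field K] [Ring A] [Algebra K A]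
    (x y : A) (h : y * x = 1) (lam : K) (hlam : lam ≠ -1) :
    (!![1, 0; -(((1 + lam)⁻¹ : K) • y), 1] * !![1, lam • x; 0, 1] *
        !![1, 0; y, 1] * !![1, -((lam * (1 + lam)⁻¹ : K) • x); 0, 1]
      : Matrix (Fin 2) (Fin 2) A) =
    !![algebraMap K A (1 + lam), 0; 0, algebraMap K A (1 + lam)⁻¹] *
      !![1 - (lam * (1 + lam)⁻¹ : K) • (1 - x * y), 0; 0, 1] := by
  have hne : 1 + lam ≠ 0 := fun h0 => hlam (eq_neg_of_add_eq_zero_right h0)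
  exact lower_upper_lower_upper_eq h (mul_inv_cancel₀ hne)
end

section
/- Let Λ be a ring containing a division ring D and an idempotent e commuting with D, Λ = D ⊕ De, and let S₁(Λ) = Λ⟨x,y | yx=1⟩ with x, y commuting with Λ. For each λ ∈ D with λ ≠ -1, the identity [[1,0],[-(1+λe)^{-1}y,1]]·[[1,λex],[0,1]]·[[1,0],[y,1]]·[[1,-(1+λe)^{-1}λex],[0,1]] = [[1+λe,0],[0,(1+λe)^{-1}]]·[[1-(1+λ)^{-1}λeE₀₀,0],[0,1]] holds in M₂(S₁(Λ)), where E₀₀ = 1 - xy and (1+λe)^{-1} = 1 - (1+λ)^{-1}λe. -/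
/-!
Since `e` is an idempotent commuting with `D`, `(1 - βe)(1 + λe) = 1 + (λ - β(1 + λ))e`, so
`β = (1 + λ)⁻¹λ` makes `v = 1 - βe` a two-sided inverse of `1 + λe`. With `n = λe`, `m = βe` we have
`vn = m` and `(1 + n)m = n`, and `yx = 1` collapses the four elementary factors step by step:
the first two multiply to `[[1, nx], [-vy, v]]`, the third clears the lower left corner, leaving
`[[1 + nxy, nx], [0, v]]`, and the last clears the upper right corner. Finally
`(1 + n)(1 - m(1 - xy)) = 1 + nxy`.
-/

theorem IsIdempotentElem.one_sub_mul_mul_one_add_mul_eq_one {R : Type*} [Ring R] {e a b : R}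
    (he : IsIdempotentElem e) (hae : Commute a e) (h : b * (1 + a) = a) :
    (1 - b * e) * (1 + a * e) = 1 := by
  have heae : b * e * (a * e) = b * a * e := by
    rw [mul_assoc, ← mul_assoc e, ← hae.eq, mul_assoc a, he.eq, ← mul_assoc]
  have hsum : b * e + b * a * e = a * e := by rw [← add_mul, ← mul_one_add, h]
  rw [sub_mul, one_mul, mul_add, mul_one, heae, ← hsum]
  abel

theorem IsIdempotentElem.one_add_mul_mul_one_sub_mul_eq_one {R : Type*} [Ring R] {e a b : R}
    (he : IsIdempotentElem e) (hbe : Commute b e) (h : (1 + a) * b = a) :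
    (1 + a * e) * (1 - b * e) = 1 := by
  have hebe : a * e * (b * e) = a * b * e := by
    rw [mul_assoc, ← mul_assoc e, ← hbe.eq, mul_assoc b, he.eq, ← mul_assoc]
  have hsum : b * e + a * b * e = a * e := by rw [← add_mul, ← one_add_mul, h]
  rw [add_mul, one_mul, mul_sub, mul_one, hebe, ← hsum]
  abel

theorem Matrix.elementary_product_eq_diag_mul_diag {A : Type*} [Ring A] {n m x y : A}
    (hleft : (1 - m) * (1 + n) = 1) (hright : (1 + n) * (1 - m) = 1)
    (hny : Commute n y) (hmx : Commute m x) (hmy : Commute m y)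
    (hyx : y * x = 1) :
    (!![1, 0; -((1 - m) * y), 1] * !![1, n * x; 0, 1] * !![1, 0; y, 1] *
        !![1, -((1 - m) * n * x); 0, 1] : Matrix (Fin 2) (Fin 2) A) =
    !![1 + n, 0; 0, 1 - m] * !![1 - m * (1 - x * y), 0; 0, 1] := by
  have hmn : (1 - m) * n = m := by
    rw [mul_add, mul_one] at hleft
    exact (add_right_inj (1 - m)).1 (hleft.trans (sub_add_cancel 1 m).symm)
  have hnm : (1 + n) * m = n := by
    rw [mul_sub, mul_one, sub_eq_iff_eq_add] at hright
    exact add_left_cancel hright.symm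
  have h11 : -((1 - m) * y * (n * x)) + 1 = 1 - m := by
    rw [mul_assoc, ← mul_assoc y, ← hny.eq, mul_assoc n, hyx, mul_one, hmn, neg_add_eq_sub]
  have h01 : (1 + n * x * y) * (m * x) = n * x := by
    rw [add_mul, one_mul, mul_assoc (n * x), ← mul_assoc y, ← hmy.eq, mul_assoc m, hyx, mul_one,
      mul_assoc n, ← hmx.eq, ← one_add_mul, ← mul_assoc, hnm]
  have h00 : (1 + n) * (1 - m * (1 - x * y)) = 1 + n * x * y := by
    rw [mul_sub, mul_one, ← mul_assoc, hnm, mul_sub, mul_one, mul_assoc]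
    abel
  calc _ = !![1, n * x; -((1 - m) * y), 1 - m] * !![1, 0; y, 1] *
          !![1, -((1 - m) * n * x); 0, 1] := by
        simp [h11]
    _ = !![1 + n * x * y, n * x; 0, 1 - m] * !![1, -(m * x); 0, 1] := by
        simp [hmn, mul_assoc]
    _ = !![1 + n * x * y, 0; 0, 1 - m] := by
        simp [h01]
    _ = _ := by
        simp [h00]

theorem elementary_matrix_identity_S1_Lambda_general {D L A : Type*} [DivisionRing D] [Ring L] [Ring A]
    (f : D →+* L) (e : L) (he : e * e = e) (hc : ∀ d : D, f d * e = e * f d)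
    (g : L →+* A) (x y : A) (h : y * x = 1)
    (hx : ∀ l : L, g l * x = x * g l) (hy : ∀ l : L, g l * y = y * g l)
    (lam : D) (hlam : lam ≠ -1) :
    (!![1, 0; -((1 - g (f ((1 + lam)⁻¹ * lam)) * g e) * y), 1] *
        !![1, g (f lam) * g e * x; 0, 1] * !![1, 0; y, 1] *
        !![1, -((1 - g (f ((1 + lam)⁻¹ * lam)) * g e) * (g (f lam) * g e) * x); 0, 1]
      : Matrix (Fin 2) (Fin 2) A) =
    !![1 + g (f lam) * g e, 0; 0, 1 - g (f ((1 + lam)⁻¹ * lam)) * g e] *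
      !![1 - g (f ((1 + lam)⁻¹ * lam)) * g e * (1 - x * y), 0; 0, 1] := by
  have h0 : 1 + lam ≠ 0 := fun h0 => hlam (eq_neg_of_add_eq_zero_right h0)
  have hleftD : (1 + lam)⁻¹ * lam * (1 + lam) = lam := by
    rw [mul_assoc, ((Commute.one_left lam).add_left (Commute.refl lam)).eq.symm,
      inv_mul_cancel_left₀ h0]
  have hrightD : (1 + lam) * ((1 + lam)⁻¹ * lam) = lam := mul_inv_cancel_left₀ h0 lam
  have hE : IsIdempotentElem (g e) := IsIdempotentElem.map (f := g) he
  have hcE : ∀ d : D, Commute (g (f d)) (g e) := fun d => (show Commute (f d) e from hc d).map g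
  have hxc : ∀ l : L, Commute (g l) x := hx
  have hyc : ∀ l : L, Commute (g l) y := hy
  exact Matrix.elementary_product_eq_diag_mul_diag
    (hE.one_sub_mul_mul_one_add_mul_eq_one (hcE lam)
      (by simpa only [map_mul, map_add, map_one] using congrArg (fun d => g (f d)) hleftD))
    (hE.one_add_mul_mul_one_sub_mul_eq_one (hcE ((1 + lam)⁻¹ * lam))
      (by simpa only [map_mul, map_add, map_one] using congrArg (fun d => g (f d)) hrightD))
    ((hyc _).mul_left (hyc e)) ((hxc _).mul_left (hxc e)) ((hyc _).mul_left (hyc e)) h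

/-- Let `D` be a division ring, `Λ = D ⊕ De` with `e² = e` and `e` commuting with `D`, and let
`S₁(Λ) = Λ⟨x,y | yx = 1⟩` with `x, y` commuting with `Λ`. For `λ ∈ D`, `λ ≠ -1`, writing
`(1+λe)⁻¹ = 1 - (1+λ)⁻¹λe`, the identity
`[[1,0],[-(1+λe)⁻¹y,1]]·[[1,λex],[0,1]]·[[1,0],[y,1]]·[[1,-(1+λe)⁻¹λex],[0,1]]
  = [[1+λe,0],[0,(1+λe)⁻¹]]·[[1-(1+λ)⁻¹λeE₀₀,0],[0,1]]` holds in `M₂(S₁(Λ))`,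
where `E₀₀ = 1 - xy`. -/
theorem elementary_matrix_identity_S1_Lambda {D L A : Type*} [DivisionRing D] [Ring L] [Ring A]
    (f : D →+* L) (e : L) (he : e * e = e) (hc : ∀ d : D, f d * e = e * f d)
    (hspan : ∀ l : L, ∃! p : D × D, l = f p.1 + f p.2 * e)
    (g : L →+* A) (x y : A) (h : y * x = 1)
    (hx : ∀ l : L, g l * x = x * g l) (hy : ∀ l : L, g l * y = y * g l)
    (lam : D) (hlam : lam ≠ -1) :
    (!![1, 0; -((1 - g (f ((1 + lam)⁻¹ * lam)) * g e) * y), 1] *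
        !![1, g (f lam) * g e * x; 0, 1] * !![1, 0; y, 1] *
        !![1, -((1 - g (f ((1 + lam)⁻¹ * lam)) * g e) * (g (f lam) * g e) * x); 0, 1]
      : Matrix (Fin 2) (Fin 2) A) =
    !![1 + g (f lam) * g e, 0; 0, 1 - g (f ((1 + lam)⁻¹ * lam)) * g e] *
      !![1 - g (f ((1 + lam)⁻¹ * lam)) * g e * (1 - x * y), 0; 0, 1] :=
  elementary_matrix_identity_S1_Lambda_general f e he hc g x y h hx hy lam hlam
end

section
/- Let S₂ = K⟨x₁,y₁,x₂,y₂⟩ subject to y₁x₁ = 1, y₂x₂ = 1, and the pairs (x₁,y₁) and (x₂,y₂) pairwise commute. Set e₂ := 1 - x₂y₂. Then the matrix identity [[1,0],[-x₂y₁,1]]·[[1,(y₂-1)x₁],[0,1]]·[[1,0],[y₁,1]]·[[1,-(y₂-1)x₁],[0,1]]·[[1,(y₂-1)(1-x₂)x₁],[0,1]] = [[1+(y₂-1)x₁y₁,0],[e₂y₁,x₂]] holds in M₂(S₂). -/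
/-!
Multiply out from the right. The last two upper factors merge into the single elementary matrix
with entry `c = (x₂ - 1) x₁`, because `(y₂ - 1)(1 - x₂) = (y₂ - 1) + (x₂ - 1)` once `y₂ x₂ = 1`.
The relation `y₁ c = x₂ - 1` then turns the product of the three right-hand factors into the
lower triangular matrix `[[1 + a y₁, 0], [y₁, x₂]]` with `a = (y₂ - 1) x₁`, and
`y₁ a = y₂ - 1` collapses the remaining lower left entry to `(1 - x₂ y₂) y₁`.
-/

open Matrix

section Entries

variable {R : Type*} [Ring R] {x y z : R}

theorem sub_one_mul_one_sub_of_mul_eq_one (h : y * x = 1) :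
    (y - 1) * (1 - x) = y - 1 + (x - 1) := by
  rw [mul_sub, mul_one, sub_mul, h, one_mul]
  abel

theorem mul_sub_one_mul_of_mul_eq_one (h : y * x = 1) (hz : Commute y z) :
    y * ((z - 1) * x) = z - 1 := by
  rw [← mul_assoc, (hz.sub_right (Commute.one_right y)).eq, mul_assoc, h, mul_one]

end Entries

section Elementary

variable {R : Type*}

theorem upper_mul_upper [NonAssocSemiring R] (a b : R) :
    !![1, a; 0, 1] * !![1, b; 0, 1] = !![(1 : R), a + b; 0, 1] := by
  rw [mul_fin_two]
  simp only [one_mul, mul_one, mul_zero, zero_mul, add_zero, zero_add, add_comm b]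

theorem lower_mul_lowerTriangular [NonAssocSemiring R] (u p q r : R) :
    !![1, 0; u, 1] * !![p, 0; q, r] = !![p, 0; u * p + q, r] := by
  rw [mul_fin_two]
  simp only [one_mul, mul_zero, zero_mul, add_zero, zero_add]

theorem upper_mul_lower_mul_upper_of_mul_eq_one [Ring R] {x₁ y₁ x₂ y₂ : R}
    (h1 : y₁ * x₁ = 1) (h2 : y₂ * x₂ = 1) (c1 : Commute x₁ x₂) (c3 : Commute y₁ x₂) :
    !![1, (y₂ - 1) * x₁; 0, 1] * !![1, 0; y₁, 1] * !![1, (x₂ - 1) * x₁; 0, 1] =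
      !![1 + (y₂ - 1) * x₁ * y₁, 0; y₁, x₂] := by
  have hc := mul_sub_one_mul_of_mul_eq_one h1 c3
  have upper_right : (1 + (y₂ - 1) * x₁ * y₁) * ((x₂ - 1) * x₁) + (y₂ - 1) * x₁ = 0 := by
    have hx₁ : (y₂ - 1) * x₁ * (x₂ - 1) = (y₂ - 1) * (x₂ - 1) * x₁ := by
      rw [mul_assoc, (c1.sub_right (Commute.one_right x₁)).eq, mul_assoc]
    calc (1 + (y₂ - 1) * x₁ * y₁) * ((x₂ - 1) * x₁) + (y₂ - 1) * x₁
        = (x₂ - 1) * x₁ + (y₂ - 1) * x₁ * (y₁ * ((x₂ - 1) * x₁)) + (y₂ - 1) * x₁ := by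
          noncomm_ring
      _ = (y₂ * x₂ - 1) * x₁ := by rw [hc, hx₁]; noncomm_ring
      _ = 0 := by rw [h2, sub_self, zero_mul]
  simp only [mul_fin_two, one_mul, mul_one, mul_zero, add_zero, zero_add]
  rw [upper_right, hc, sub_add_cancel]

end Elementary

theorem five_matrix_identity_S2_general {A : Type*} [Ring A]
    (x₁ y₁ x₂ y₂ : A) (h1 : y₁ * x₁ = 1) (h2 : y₂ * x₂ = 1)
    (c1 : x₁ * x₂ = x₂ * x₁)
    (c3 : y₁ * x₂ = x₂ * y₁) (c4 : y₁ * y₂ = y₂ * y₁) :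
    (!![1, 0; -(x₂ * y₁), 1] * !![1, (y₂ - 1) * x₁; 0, 1] * !![1, 0; y₁, 1] *
        !![1, -((y₂ - 1) * x₁); 0, 1] * !![1, (y₂ - 1) * (1 - x₂) * x₁; 0, 1]
      : Matrix (Fin 2) (Fin 2) A) =
    !![1 + (y₂ - 1) * x₁ * y₁, 0; (1 - x₂ * y₂) * y₁, x₂] := by
  have merge : !![1, -((y₂ - 1) * x₁); 0, 1] * !![1, (y₂ - 1) * (1 - x₂) * x₁; 0, 1] =
      !![(1 : A), (x₂ - 1) * x₁; 0, 1] := by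
    rw [upper_mul_upper, sub_one_mul_one_sub_of_mul_eq_one h2, add_mul, neg_add_cancel_left]
  have lower_left : -(x₂ * y₁) * (1 + (y₂ - 1) * x₁ * y₁) + y₁ = (1 - x₂ * y₂) * y₁ :=
    calc -(x₂ * y₁) * (1 + (y₂ - 1) * x₁ * y₁) + y₁
        = -(x₂ * y₁) - x₂ * (y₁ * ((y₂ - 1) * x₁)) * y₁ + y₁ := by noncomm_ring
      _ = (1 - x₂ * y₂) * y₁ := by rw [mul_sub_one_mul_of_mul_eq_one h1 c4]; noncomm_ring
  rw [Matrix.mul_assoc _ !![1, -((y₂ - 1) * x₁); 0, 1], merge, Matrix.mul_assoc,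
    Matrix.mul_assoc, ← Matrix.mul_assoc !![1, (y₂ - 1) * x₁; 0, 1],
    upper_mul_lower_mul_upper_of_mul_eq_one h1 h2 c1 c3, lower_mul_lowerTriangular,
    lower_left]

/-- In `M₂(S₂)`, where `S₂ = K⟨x₁,y₁,x₂,y₂ | y₁x₁ = 1, y₂x₂ = 1, cross-commutation⟩` and
`e₂ = 1 - x₂y₂`:
`[[1,0],[-x₂y₁,1]]·[[1,(y₂-1)x₁],[0,1]]·[[1,0],[y₁,1]]·[[1,-(y₂-1)x₁],[0,1]]·
 [[1,(y₂-1)(1-x₂)x₁],[0,1]] = [[1+(y₂-1)x₁y₁,0],[e₂y₁,x₂]]`. -/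
theorem five_matrix_identity_S2 {K A : Type*} [Field K] [Ring A] [Algebra K A]
    (x₁ y₁ x₂ y₂ : A) (h1 : y₁ * x₁ = 1) (h2 : y₂ * x₂ = 1)
    (c1 : x₁ * x₂ = x₂ * x₁) (c2 : x₁ * y₂ = y₂ * x₁)
    (c3 : y₁ * x₂ = x₂ * y₁) (c4 : y₁ * y₂ = y₂ * y₁) :
    (!![1, 0; -(x₂ * y₁), 1] * !![1, (y₂ - 1) * x₁; 0, 1] * !![1, 0; y₁, 1] *
        !![1, -((y₂ - 1) * x₁); 0, 1] * !![1, (y₂ - 1) * (1 - x₂) * x₁; 0, 1]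
      : Matrix (Fin 2) (Fin 2) A) =
    !![1 + (y₂ - 1) * x₁ * y₁, 0; (1 - x₂ * y₂) * y₁, x₂] :=
  five_matrix_identity_S2_general x₁ y₁ x₂ y₂ h1 h2 c1 c3 c4
end

section
/- In S₂ = K⟨x₁,y₁,x₂,y₂ | y₁x₁=1, y₂x₂=1, cross-commutation⟩ with e₁ := 1-x₁y₁ and e₂ := 1-x₂y₂, the matrix product [[x₂,e₂],[0,y₂]] · [[1+(y₂-1)x₁y₁,0],[e₂y₁,x₂]] equals [[θ₁₂,0],[0,1]], where θ₁₂ := (1+(y₁-1)e₂)(1+(x₂-1)e₁). -/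
/-!
Both off-diagonal entries vanish because `e₂ x₂ = 0` and `y₂ e₂ = 0`. For the top-left entry,
expanding both sides leaves a difference that is a combination of three facts: `e₂` is idempotent,
`e₂ x₂ = 0`, and conjugation by the isometry `x₁` fixes `e₂`, i.e. `y₁ e₂ x₁ = e₂`, since `x₁`
commutes with `x₂ y₂`.
-/

section Isometry

variable {R : Type*} [Ring R] {x y : R}

theorem isIdempotentElem_mul_of_mul_eq_one (h : y * x = 1) : IsIdempotentElem (x * y) := by
  rw [IsIdempotentElem, mul_assoc, ← mul_assoc y, h, one_mul]

theorem one_sub_mul_mul_self_of_mul_eq_one (h : y * x = 1) : (1 - x * y) * x = 0 := by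
  rw [sub_mul, one_mul, mul_assoc, h, mul_one, sub_self]

theorem mul_one_sub_mul_of_mul_eq_one (h : y * x = 1) : y * (1 - x * y) = 0 := by
  rw [mul_sub, mul_one, ← mul_assoc, h, one_mul, sub_self]

theorem mul_mul_eq_self_of_commute (h : y * x = 1) {a : R} (ha : Commute x a) : y * a * x = a := by
  rw [mul_assoc, ← ha.eq, ← mul_assoc, h, one_mul]

end Isometry

theorem top_left_entry_eq_theta {R : Type*} [Ring R] {x₁ y₁ x₂ y₂ : R}
    (h1 : y₁ * x₁ = 1) (h2 : y₂ * x₂ = 1) (hc : Commute x₁ (x₂ * y₂)) :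
    x₂ * (1 + (y₂ - 1) * x₁ * y₁) + (1 - x₂ * y₂) * ((1 - x₂ * y₂) * y₁) =
      (1 + (y₁ - 1) * (1 - x₂ * y₂)) * (1 + (x₂ - 1) * (1 - x₁ * y₁)) := by
  set e := 1 - x₂ * y₂ with he
  have he_idem : e * e = e := (isIdempotentElem_mul_of_mul_eq_one h2).one_sub
  have he_x₂ : e * x₂ = 0 := one_sub_mul_mul_self_of_mul_eq_one h2
  have he_conj : y₁ * e * x₁ = e :=
    mul_mul_eq_self_of_commute h1 ((Commute.one_right x₁).sub_right hc)
  calc _ = (1 + (y₁ - 1) * e) * (1 + (x₂ - 1) * (1 - x₁ * y₁)) + (e * e - e) * y₁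
        - (y₁ - 1) * (e * x₂) * (1 - x₁ * y₁) + (e - y₁ * e * x₁) * y₁ := by
          rw [he]; noncomm_ring
    _ = _ := by rw [he_idem, he_x₂, he_conj]; noncomm_ring

theorem theta12_matrix_identity_S2_general {A : Type*} [Ring A]
    (x₁ y₁ x₂ y₂ : A) (h1 : y₁ * x₁ = 1) (h2 : y₂ * x₂ = 1)
    (c1 : x₁ * x₂ = x₂ * x₁) (c2 : x₁ * y₂ = y₂ * x₁) :
    (!![x₂, 1 - x₂ * y₂; 0, y₂] * !![1 + (y₂ - 1) * x₁ * y₁, 0; (1 - x₂ * y₂) * y₁, x₂]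
      : Matrix (Fin 2) (Fin 2) A) =
    !![(1 + (y₁ - 1) * (1 - x₂ * y₂)) * (1 + (x₂ - 1) * (1 - x₁ * y₁)), 0; 0, 1] := by
  have hc : Commute x₁ (x₂ * y₂) := Commute.mul_right c1 c2
  rw [Matrix.mul_fin_two, top_left_entry_eq_theta h1 h2 hc, ← mul_assoc y₂,
    mul_one_sub_mul_of_mul_eq_one h2, one_sub_mul_mul_self_of_mul_eq_one h2, h2]
  simp

/-- In `M₂(S₂)` with `e₁ = 1 - x₁y₁`, `e₂ = 1 - x₂y₂`:
`[[x₂,e₂],[0,y₂]] · [[1+(y₂-1)x₁y₁,0],[e₂y₁,x₂]] = [[θ₁₂,0],[0,1]]`, where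
`θ₁₂ = (1+(y₁-1)e₂)(1+(x₂-1)e₁)`. -/
theorem theta12_matrix_identity_S2 {K A : Type*} [Field K] [Ring A] [Algebra K A]
    (x₁ y₁ x₂ y₂ : A) (h1 : y₁ * x₁ = 1) (h2 : y₂ * x₂ = 1)
    (c1 : x₁ * x₂ = x₂ * x₁) (c2 : x₁ * y₂ = y₂ * x₁)
    (c3 : y₁ * x₂ = x₂ * y₁) (c4 : y₁ * y₂ = y₂ * y₁) :
    (!![x₂, 1 - x₂ * y₂; 0, y₂] * !![1 + (y₂ - 1) * x₁ * y₁, 0; (1 - x₂ * y₂) * y₁, x₂]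
      : Matrix (Fin 2) (Fin 2) A) =
    !![(1 + (y₁ - 1) * (1 - x₂ * y₂)) * (1 + (x₂ - 1) * (1 - x₁ * y₁)), 0; 0, 1] :=
  theta12_matrix_identity_S2_general x₁ y₁ x₂ y₂ h1 h2 c1 c2
end

section
/- In S₂ = K⟨x₁,y₁,x₂,y₂ | y₁x₁=1, y₂x₂=1, cross-commutation⟩, the element θ₁₂ := (1+(y₁-1)e₂)(1+(x₂-1)e₁) is a unit with inverse θ₂₁ := (1+(y₂-1)e₁)(1+(x₁-1)e₂), where e_i := 1 - x_i y_i. -/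
/-!
For an idempotent `e` commuting with `b`, `twist a e = 1 + (a - 1) e` acts as `a` on `eA` and
trivially on `(1 - e)A`, so `twist a e * twist b e = twist (a * b) e`. In `θ₁₂ θ₂₁` the middle factors
therefore collapse to `twist (x₂ y₂) e₁ = 1 - e₂ e₁` and the outer ones to `twist (y₁ x₁) e₂ = 1`;
the remaining term `twist y₁ e₂ * e₂ * e₁ = e₂ y₁ e₁` vanishes because `y₁ e₁ = 0`. The other product
is the same computation with the indices swapped, since `θ₂₁ = theta x₂ y₂ x₁ y₁`.
-/

namespace S2

variable {A : Type*} [Ring A]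

def twist (a e : A) : A := 1 + (a - 1) * e

def theta (x₁ y₁ x₂ y₂ : A) : A := twist y₁ (1 - x₂ * y₂) * twist x₂ (1 - x₁ * y₁)

lemma twist_one (e : A) : twist 1 e = 1 := by
  simp [twist]

lemma twist_mul_self {a e : A} (he : IsIdempotentElem e) : twist a e * e = a * e := by
  rw [twist, add_mul, one_mul, mul_assoc, he.eq]
  noncomm_ring

lemma twist_mul_twist {a b e : A} (he : IsIdempotentElem e) (hb : Commute b e) :
    twist a e * twist b e = twist (a * b) e := by
  have hbe : e * ((b - 1) * e) = (b - 1) * e := by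
    rw [← mul_assoc, ← (hb.sub_left (Commute.one_left e)).eq, mul_assoc, he.eq]
  calc twist a e * twist b e
      = 1 + (a - 1) * e + (b - 1) * e + (a - 1) * (e * ((b - 1) * e)) := by
        simp only [twist]; noncomm_ring
    _ = twist (a * b) e := by rw [hbe, twist]; noncomm_ring

lemma isIdempotentElem_one_sub_mul {x y : A} (h : y * x = 1) : IsIdempotentElem (1 - x * y) :=
  IsIdempotentElem.one_sub <| by rw [IsIdempotentElem, mul_assoc, ← mul_assoc y, h, one_mul]

lemma mul_one_sub_mul_eq_zero {x y : A} (h : y * x = 1) : y * (1 - x * y) = 0 := by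
  rw [mul_sub, mul_one, ← mul_assoc, h, one_mul, sub_self]

lemma commute_one_sub_mul {a x y : A} (hx : Commute a x) (hy : Commute a y) :
    Commute a (1 - x * y) :=
  (Commute.one_right a).sub_right (hx.mul_right hy)

lemma theta_mul_theta_eq_one {x₁ y₁ x₂ y₂ : A} (h1 : y₁ * x₁ = 1) (h2 : y₂ * x₂ = 1)
    (c1 : Commute x₁ x₂) (c2 : Commute x₁ y₂) (c3 : Commute y₁ x₂) (c4 : Commute y₁ y₂) :
    theta x₁ y₁ x₂ y₂ * theta x₂ y₂ x₁ y₁ = 1 := by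
  set e₁ := 1 - x₁ * y₁
  set e₂ := 1 - x₂ * y₂
  have he₁ : IsIdempotentElem e₁ := isIdempotentElem_one_sub_mul h1
  have he₂ : IsIdempotentElem e₂ := isIdempotentElem_one_sub_mul h2
  have outer : twist y₁ e₂ * twist x₁ e₂ = 1 := by
    rw [twist_mul_twist he₂ (commute_one_sub_mul c1 c2), h1, twist_one]
  have middle : twist x₂ e₁ * twist y₂ e₁ = 1 - e₂ * e₁ := by
    rw [twist_mul_twist he₁ (commute_one_sub_mul c2.symm c4.symm), twist]
    simp only [e₂]
    noncomm_ring
  have vanishing : twist y₁ e₂ * e₂ * e₁ = 0 := by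
    rw [twist_mul_self he₂, (commute_one_sub_mul c3 c4).eq, mul_assoc,
      mul_one_sub_mul_eq_zero h1, mul_zero]
  calc theta x₁ y₁ x₂ y₂ * theta x₂ y₂ x₁ y₁
      = twist y₁ e₂ * (twist x₂ e₁ * twist y₂ e₁) * twist x₁ e₂ := by
        simp only [theta, mul_assoc, e₁, e₂]
    _ = twist y₁ e₂ * twist x₁ e₂ - twist y₁ e₂ * e₂ * e₁ * twist x₁ e₂ := by
        rw [middle]; noncomm_ring
    _ = 1 := by rw [outer, vanishing, zero_mul, sub_zero]

end S2

theorem theta12_unit_S2_general {A : Type*} [Ring A]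
    (x₁ y₁ x₂ y₂ : A) (h1 : y₁ * x₁ = 1) (h2 : y₂ * x₂ = 1)
    (c1 : x₁ * x₂ = x₂ * x₁) (c2 : x₁ * y₂ = y₂ * x₁)
    (c3 : y₁ * x₂ = x₂ * y₁) (c4 : y₁ * y₂ = y₂ * y₁) :
    ((1 + (y₁ - 1) * (1 - x₂ * y₂)) * (1 + (x₂ - 1) * (1 - x₁ * y₁))) *
      ((1 + (y₂ - 1) * (1 - x₁ * y₁)) * (1 + (x₁ - 1) * (1 - x₂ * y₂))) = 1 ∧
    ((1 + (y₂ - 1) * (1 - x₁ * y₁)) * (1 + (x₁ - 1) * (1 - x₂ * y₂))) *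
      ((1 + (y₁ - 1) * (1 - x₂ * y₂)) * (1 + (x₂ - 1) * (1 - x₁ * y₁))) = 1 :=
  ⟨S2.theta_mul_theta_eq_one h1 h2 c1 c2 c3 c4,
    S2.theta_mul_theta_eq_one h2 h1 c1.symm c3.symm c2.symm c4.symm⟩

/-- In `S₂ = K⟨x₁,y₁,x₂,y₂ | y₁x₁ = 1, y₂x₂ = 1, cross-commutation⟩` with `eᵢ = 1 - xᵢyᵢ`,
the element `θ₁₂ = (1+(y₁-1)e₂)(1+(x₂-1)e₁)` is a unit with inverse
`θ₂₁ = (1+(y₂-1)e₁)(1+(x₁-1)e₂)`. -/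
theorem theta12_unit_S2 {K A : Type*} [Field K] [Ring A] [Algebra K A]
    (x₁ y₁ x₂ y₂ : A) (h1 : y₁ * x₁ = 1) (h2 : y₂ * x₂ = 1)
    (c1 : x₁ * x₂ = x₂ * x₁) (c2 : x₁ * y₂ = y₂ * x₁)
    (c3 : y₁ * x₂ = x₂ * y₁) (c4 : y₁ * y₂ = y₂ * y₁) :
    ((1 + (y₁ - 1) * (1 - x₂ * y₂)) * (1 + (x₂ - 1) * (1 - x₁ * y₁))) *
      ((1 + (y₂ - 1) * (1 - x₁ * y₁)) * (1 + (x₁ - 1) * (1 - x₂ * y₂))) = 1 ∧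
    ((1 + (y₂ - 1) * (1 - x₁ * y₁)) * (1 + (x₁ - 1) * (1 - x₂ * y₂))) *
      ((1 + (y₁ - 1) * (1 - x₂ * y₂)) * (1 + (x₂ - 1) * (1 - x₁ * y₁))) = 1 :=
  theta12_unit_S2_general x₁ y₁ x₂ y₂ h1 h2 c1 c2 c3 c4
end
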